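/- arXiv:2505.08887 — 2 statements merged into one kernel-verified Lean document; each statement's English description precedes it below -/
import Mathlib

section
/- Let m, n ≥ 1 be odd integers and G = K_{m,n} the non-abelian metacyclic group of order 2mn presented by a^m = 1, b^{2n} = 1, bab⁻¹ = a⁻¹. For even integers r = 2r₁ and s = 2s₁ with 1 ≤ r, s ≤ 2mn and r₁ + s₁ - 1 ≤ mn, there exist subsets A, B ⊆ G with |A| = r, |B| = s, and |AB| ≤ r + s - 2. -/
/-!
Write `a, b` for the generators and put `x = a`, `y = b²`, `t = bⁿ`. As `n` is odd, `x` and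
`y` commute, and `t` is an involution outside `⟨x, y⟩` that inverts `x` and fixes `y`. Let `S` and
`T` be the lexicographic segments of lengths `r₁` and `s₁`, made of the first words `x^i y^j`
(`i < m`) in the order of `j m + i`. Then `S T` lies in the segment of length `r₁ + s₁ - 1`.
For `A = S ∪ S t` and `B = T ∪ t T` we get `A B = S T ∪ S t T` since `t² = 1`, and
`S t T = S (t T t⁻¹) t`, where `t T t⁻¹` is contained in a translate of `T` by a power of `x`.
Hence `|A B| ≤ 2 (r₁ + s₁ - 1)`. The words are distinct because they stay distinct in
`D_m × C_{2n}`, and `t ∉ ⟨x, y⟩` by the parity of the exponent of `b`.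
-/

open scoped Pointwise

/-- The relations of the metacyclic presentation
`K_{m,n} = ⟨a, b : a^m = 1, b^(2n) = a^g, b a b⁻¹ = a⁻¹⟩`, with generator `0`
playing the role of `a` and generator `1` playing the role of `b`. -/
def Krels (m n g : ℕ) : Set (FreeGroup (Fin 2)) :=
  {FreeGroup.of 0 ^ m,
   FreeGroup.of 1 ^ (2 * n) * (FreeGroup.of 0 ^ g)⁻¹,
   FreeGroup.of 1 * FreeGroup.of 0 * (FreeGroup.of 1)⁻¹ * FreeGroup.of 0}

open Finset

section LexSegment

variable {G H : Type*} [Group G] [Group H] [DecidableEq G] [DecidableEq H] {x y : G} {m r s : ℕ}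

def lexSegment (x y : G) (m r : ℕ) : Finset G :=
  (range r).image fun k => x ^ (k % m) * y ^ (k / m)

theorem mem_lexSegment (hm : 0 < m) {g : G} :
    g ∈ lexSegment x y m r ↔ ∃ i j, i < m ∧ j * m + i < r ∧ x ^ i * y ^ j = g := by
  simp only [lexSegment, mem_image, mem_range]
  constructor
  · rintro ⟨k, hk, rfl⟩
    exact ⟨k % m, k / m, Nat.mod_lt k hm, by rwa [Nat.div_add_mod'], rfl⟩
  · rintro ⟨i, j, hi, hr, rfl⟩
    refine ⟨j * m + i, hr, ?_⟩
    rw [Nat.mul_add_mod_of_lt hi,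
      Nat.div_eq_of_lt_le (k := j) (by omega) (by rw [add_one_mul]; omega)]

theorem card_lexSegment (hinj : Set.InjOn (fun k => x ^ (k % m) * y ^ (k / m)) (range r)) :
    #(lexSegment x y m r) = r := by
  rw [lexSegment, card_image_of_injOn hinj, card_range]

theorem card_lexSegment_le : #(lexSegment x y m r) ≤ r :=
  card_image_le.trans (card_range r).le

theorem image_lexSegment (f : G →* H) :
    (lexSegment x y m r).image f = lexSegment (f x) (f y) m r := by
  simp only [lexSegment, image_image, Function.comp_def, map_mul, map_pow]

theorem lexSegment_subset_closure :
    ↑(lexSegment x y m r) ⊆ (Subgroup.closure {x, y} : Set G) := by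
  simp only [lexSegment, coe_image, Set.image_subset_iff]
  intro k _
  exact Subgroup.mul_mem _ (Subgroup.pow_mem _ (Subgroup.subset_closure (by simp)) _)
    (Subgroup.pow_mem _ (Subgroup.subset_closure (by simp)) _)

theorem lexSegment_mul_subset (hm : 0 < m) (hx : x ^ m = 1) (hxy : Commute x y) :
    lexSegment x y m r * lexSegment x y m s ⊆ lexSegment x y m (r + s - 1) := by
  intro g hg
  obtain ⟨u, hu, v, hv, rfl⟩ := mem_mul.mp hg
  obtain ⟨i, j, hi, hij, rfl⟩ := (mem_lexSegment hm).mp hu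
  obtain ⟨k, l, hk, hkl, rfl⟩ := (mem_lexSegment hm).mp hv
  have hprod : x ^ i * y ^ j * (x ^ k * y ^ l) = x ^ (i + k) * y ^ (j + l) := by
    rw [pow_add, pow_add, mul_assoc, ← mul_assoc (y ^ j), ← (hxy.pow_pow k j).eq]
    simp only [mul_assoc]
  rw [mem_lexSegment hm, hprod]
  rcases lt_or_ge (i + k) m with h | h
  · exact ⟨i + k, j + l, h, by rw [add_mul]; omega, rfl⟩
  · refine ⟨i + k - m, j + l, by omega, by rw [add_mul]; omega, ?_⟩
    rw [pow_sub _ h, hx, inv_one, mul_one]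

/- Reflecting `x` only moves the last, incomplete row of the segment: the full rows are
invariant under multiplication by powers of `x`. -/
theorem pow_mul_mem_lexSegment_of_mem_inv (hm : 0 < m) (hx : x ^ m = 1) {g : G}
    (hg : g ∈ lexSegment x⁻¹ y m s) : x ^ ((s - 1) % m) * g ∈ lexSegment x y m s := by
  obtain ⟨i, j, hi, hij, rfl⟩ := (mem_lexSegment hm).mp hg
  set c := (s - 1) % m
  have hc : c < m := Nat.mod_lt _ hm
  have hs : (s - 1) / m * m + c = s - 1 := Nat.div_add_mod' _ _
  have hrow : j = (s - 1) / m ∨ j * m + m ≤ (s - 1) / m * m := by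
    rcases ((Nat.le_div_iff_mul_le hm).mpr (by omega : j * m ≤ s - 1)).eq_or_lt with h | h
    · exact .inl h
    · exact .inr (by simpa [add_one_mul] using Nat.mul_le_mul_right m h)
  rw [mem_lexSegment hm, ← mul_assoc, inv_pow]
  rcases le_or_gt i c with h | h
  · refine ⟨c - i, j, by omega, by rcases hrow with rfl | _ <;> omega, ?_⟩
    rw [pow_sub _ h]
  · refine ⟨m + c - i, j, by omega, by rcases hrow with rfl | _ <;> omega, ?_⟩
    rw [pow_sub _ (by omega), pow_add, hx, one_mul]

end LexSegment

section Involution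

variable {G : Type*} [Group G] [DecidableEq G] {x y t : G} {m r s : ℕ}

theorem union_mul_union_of_mul_self_eq_one (ht : t * t = 1) (S T : Finset G) :
    (S ∪ S * {t}) * (T ∪ {t} * T) = S * T ∪ S * {t} * T := by
  have hS : S * {t} * ({t} * T) = S * T := by
    rw [mul_assoc, ← mul_assoc {t} {t} T, singleton_mul_singleton, ht, singleton_one, one_mul]
  rw [union_mul, mul_union, mul_union, hS, ← mul_assoc, union_comm (S * T), union_assoc,
    ← union_assoc, union_idempotent]

theorem card_mul_singleton_mul_le (a : G) {S T : Finset G} (hS : ∀ u ∈ S, Commute a u)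
    (hT : ∀ v ∈ T, a * (t * v * t⁻¹) ∈ T) : #(S * {t} * T) ≤ #(S * T) := by
  refine card_le_card_of_injOn (fun g => a * g * t⁻¹) ?_ fun g _ g' _ h => by simpa using h
  rintro _ hg
  obtain ⟨_, hut, v, hv, rfl⟩ := mem_mul.mp hg
  obtain ⟨u, hu, t', ht', rfl⟩ := mem_mul.mp hut
  rw [mem_singleton] at ht'
  subst t'
  have : a * (u * t * v) * t⁻¹ = u * (a * (t * v * t⁻¹)) := by
    simp only [← mul_assoc, (hS u hu).eq]
  simpa only [this, mem_coe] using mul_mem_mul hu (hT v hv)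

theorem card_union_mul_singleton {K : Subgroup G} {S : Finset G} (hS : ↑S ⊆ (K : Set G))
    (ht : t ∉ K) : #(S ∪ S * {t}) = 2 * #S := by
  rw [card_union_of_disjoint, card_mul_singleton, two_mul]
  refine disjoint_left.mpr fun g hg hgt => ht ?_
  obtain ⟨u, hu, t', ht', rfl⟩ := mem_mul.mp hgt
  rw [mem_singleton] at ht'
  subst t'
  simpa using K.mul_mem (K.inv_mem (hS hu)) (hS hg)

theorem card_union_singleton_mul {K : Subgroup G} {S : Finset G} (hS : ↑S ⊆ (K : Set G))
    (ht : t ∉ K) : #(S ∪ {t} * S) = 2 * #S := by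
  rw [card_union_of_disjoint, card_singleton_mul, two_mul]
  refine disjoint_left.mpr fun g hg hgt => ht ?_
  obtain ⟨t', ht', u, hu, rfl⟩ := mem_mul.mp hgt
  rw [mem_singleton] at ht'
  subst t'
  simpa using K.mul_mem (hS hg) (K.inv_mem (hS hu))

theorem exists_card_mul_le_of_involution {N : ℕ} (hm : 0 < m) (hx : x ^ m = 1)
    (hxy : Commute x y) (ht : t * t = 1) (htx : t * x * t⁻¹ = x⁻¹) (hty : t * y * t⁻¹ = y)
    (hinj : Set.InjOn (fun k => x ^ (k % m) * y ^ (k / m)) (range N))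
    (ht_notMem : t ∉ Subgroup.closure {x, y}) (hr : r ≤ N) (hs : s ≤ N) :
    ∃ A B : Finset G, #A = 2 * r ∧ #B = 2 * s ∧ #(A * B) ≤ 2 * r + 2 * s - 2 := by
  set S := lexSegment x y m r
  set T := lexSegment x y m s
  have hST : #(S * T) ≤ r + s - 1 :=
    (card_le_card (lexSegment_mul_subset hm hx hxy)).trans card_lexSegment_le
  have hconj : ∀ v ∈ T, x ^ ((s - 1) % m) * (t * v * t⁻¹) ∈ T := by
    intro v hv
    refine pow_mul_mem_lexSegment_of_mem_inv hm hx ?_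
    rw [← htx, ← hty]
    exact image_lexSegment (MulAut.conj t).toMonoidHom ▸ mem_image_of_mem _ hv
  have hcomm : ∀ u ∈ S, Commute (x ^ ((s - 1) % m)) u := by
    intro u hu
    obtain ⟨k, -, rfl⟩ := mem_image.mp hu
    exact (Commute.pow_pow_self x _ _).mul_right (hxy.pow_pow _ _)
  refine ⟨S ∪ S * {t}, T ∪ {t} * T, ?_, ?_, ?_⟩
  · rw [card_union_mul_singleton lexSegment_subset_closure ht_notMem,
      card_lexSegment (hinj.mono (by simpa))]
  · rw [card_union_singleton_mul lexSegment_subset_closure ht_notMem,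
      card_lexSegment (hinj.mono (by simpa))]
  · rw [union_mul_union_of_mul_self_eq_one ht]
    calc #(S * T ∪ S * {t} * T) ≤ #(S * T) + #(S * {t} * T) := card_union_le _ _
      _ ≤ #(S * T) + #(S * T) := by grw [card_mul_singleton_mul_le _ hcomm hconj]
      _ ≤ 2 * r + 2 * s - 2 := by omega

end Involution

theorem conj_pow_eq_zpow_neg_one_pow {G : Type*} [Group G] {x y : G} (h : y * x * y⁻¹ = x⁻¹)
    (k : ℕ) : y ^ k * x * (y ^ k)⁻¹ = x ^ ((-1 : ℤ) ^ k) := by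
  induction k with
  | zero => simp
  | succ k ih =>
    have hc : MulAut.conj y (x ^ ((-1 : ℤ) ^ k)) = x ^ ((-1 : ℤ) ^ (k + 1)) := by
      rw [map_zpow, MulAut.conj_apply, h, pow_succ, mul_neg_one, zpow_neg, inv_zpow]
    rw [← hc, MulAut.conj_apply, ← ih, pow_succ']
    group

namespace Krels

variable {m n g : ℕ} {H : Type*} [Group H]

def genA : PresentedGroup (Krels m n g) := PresentedGroup.of 0

def genB : PresentedGroup (Krels m n g) := PresentedGroup.of 1

theorem genA_pow : (genA : PresentedGroup (Krels m n g)) ^ m = 1 := by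
  have h := PresentedGroup.one_of_mem (rels := Krels m n g) (x := .of 0 ^ m) (by simp [Krels])
  rwa [map_pow] at h

theorem genB_pow : (genB : PresentedGroup (Krels m n g)) ^ (2 * n) = genA ^ g := by
  have h := PresentedGroup.one_of_mem (rels := Krels m n g)
    (x := .of 1 ^ (2 * n) * (.of 0 ^ g)⁻¹) (by simp [Krels])
  rwa [map_mul, map_inv, map_pow, map_pow, mul_inv_eq_one] at h

theorem genB_mul_genA_mul_genB_inv :
    genB * genA * genB⁻¹ = (genA : PresentedGroup (Krels m n g))⁻¹ := by
  have h := PresentedGroup.one_of_mem (rels := Krels m n g)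
    (x := .of 1 * .of 0 * (.of 1)⁻¹ * .of 0) (by simp [Krels])
  rwa [map_mul, map_mul, map_mul, map_inv, mul_eq_one_iff_eq_inv] at h

def lift (α β : H) (hα : α ^ m = 1) (hβ : β ^ (2 * n) = α ^ g) (hαβ : β * α * β⁻¹ = α⁻¹) :
    PresentedGroup (Krels m n g) →* H :=
  PresentedGroup.toGroup (f := ![α, β]) <| by
    simp [Krels, hα, hβ, hαβ]

@[simp]
theorem lift_genA (α β : H) (hα : α ^ m = 1) (hβ : β ^ (2 * n) = α ^ g)
    (hαβ : β * α * β⁻¹ = α⁻¹) : lift α β hα hβ hαβ genA = α :=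
  PresentedGroup.toGroup.of _

@[simp]
theorem lift_genB (α β : H) (hα : α ^ m = 1) (hβ : β ^ (2 * n) = α ^ g)
    (hαβ : β * α * β⁻¹ = α⁻¹) : lift α β hα hβ hαβ genB = β :=
  PresentedGroup.toGroup.of _

variable (m n) in
noncomputable def toDihedralProd :
    PresentedGroup (Krels m n 0) →* DihedralGroup m × Multiplicative (ZMod (2 * n)) :=
  lift (.r 1, 1) (.sr 0, .ofAdd 1) (by ext <;> simp)
    (by
      ext
      · simp [pow_mul, sq]
      · simp [← ofAdd_nsmul])
    (by ext <;> simp)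

theorem toDihedralProd_genA_pow_mul_genB_sq_pow (i j : ℕ) :
    toDihedralProd m n (genA ^ i * (genB ^ 2) ^ j) =
      (.r i, .ofAdd ((2 * j : ℕ) : ZMod (2 * n))) := by
  simp only [toDihedralProd, map_mul, map_pow, lift_genA, lift_genB]
  ext
  · simp [sq]
  · simp [← pow_mul, ← ofAdd_nsmul, mul_comm]

theorem injOn_genA_pow_mul_genB_sq_pow :
    Set.InjOn (fun k => (genA : PresentedGroup (Krels m n 0)) ^ (k % m) * (genB ^ 2) ^ (k / m))
      (range (m * n)) := by
  intro k hk k' hk' h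
  have hm : 0 < m := Nat.pos_of_ne_zero (by rintro rfl; simp at hk)
  have hdiv {j : ℕ} (hj : j ∈ (range (m * n) : Set ℕ)) : 2 * (j / m) < 2 * n := by
    have : j / m < n := (Nat.div_lt_iff_lt_mul hm).mpr (by simpa [mul_comm] using hj)
    omega
  have h' := congrArg (toDihedralProd m n) h
  simp only [toDihedralProd_genA_pow_mul_genB_sq_pow, Prod.mk.injEq, DihedralGroup.r.injEq,
    EmbeddingLike.apply_eq_iff_eq, ZMod.natCast_eq_natCast_iff', Nat.mod_mod] at h'
  obtain ⟨hmod, hdiv'⟩ := h'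
  rw [Nat.mod_eq_of_lt (hdiv hk), Nat.mod_eq_of_lt (hdiv hk')] at hdiv'
  rw [← Nat.div_add_mod' k m, ← Nat.div_add_mod' k' m, hmod, show k / m = k' / m by omega]

theorem genB_pow_notMem_closure (hn : Odd n) :
    (genB : PresentedGroup (Krels m n 0)) ^ n ∉ Subgroup.closure {genA, genB ^ 2} := by
  have h2 : (2 : ZMod 2) = 0 := rfl
  let χ : PresentedGroup (Krels m n 0) →* Multiplicative (ZMod 2) :=
    lift 1 (.ofAdd 1) (one_pow m) (by simp [← ofAdd_nsmul, h2]) (by simp)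
  intro hmem
  have hclosure : Subgroup.closure {genA, genB ^ 2} ≤ χ.ker := by
    simp [Subgroup.closure_le, Set.insert_subset_iff, χ, ← ofAdd_nsmul, h2]
  have hker := hclosure hmem
  have hχ : χ (genB ^ n) = .ofAdd (n : ZMod 2) := by simp [χ, ← ofAdd_nsmul]
  rw [MonoidHom.mem_ker, hχ, ofAdd_eq_one] at hker
  exact ZMod.natCast_ne_zero_iff_odd.mpr hn hker

end Krels

theorem stmt14_general (m n r₁ s₁ : ℕ) (hnodd : Odd n)
    (hm : 1 ≤ m)
    (hrb : 2 * r₁ ≤ 2 * m * n) (hsb : 2 * s₁ ≤ 2 * m * n) :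
    ∃ A B : Set (PresentedGroup (Krels m n 0)),
      Nat.card A = 2 * r₁ ∧ Nat.card B = 2 * s₁ ∧
        Nat.card ↥(A * B) ≤ 2 * r₁ + 2 * s₁ - 2 := by
  classical
  have hb : (Krels.genB : PresentedGroup (Krels m n 0)) ^ (2 * n) = 1 := by
    rw [Krels.genB_pow, pow_zero]
  have hconj := conj_pow_eq_zpow_neg_one_pow
    (Krels.genB_mul_genA_mul_genB_inv (m := m) (n := n) (g := 0))
  obtain ⟨A, B, hA, hB, hAB⟩ := exists_card_mul_le_of_involution (x := Krels.genA)
    (y := Krels.genB ^ 2) (t := Krels.genB ^ n) (N := m * n) (r := r₁) (s := s₁) hm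
    Krels.genA_pow (mul_inv_eq_iff_eq_mul.mp (by simpa using hconj 2)).symm
    (by rw [← pow_add, ← two_mul, hb]) (by simpa [hnodd.neg_one_pow] using hconj n) (by group)
    Krels.injOn_genA_pow_mul_genB_sq_pow (Krels.genB_pow_notMem_closure hnodd)
    (by nlinarith) (by nlinarith)
  refine ⟨A, B, ?_, ?_, ?_⟩ <;> simpa [← Finset.coe_mul, Nat.card_eq_finsetCard]

theorem stmt14 (m n r₁ s₁ : ℕ) (hmodd : Odd m) (hnodd : Odd n)
    (hm : 1 ≤ m) (hn : 1 ≤ n)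
    (hna : ¬ ∀ x y : PresentedGroup (Krels m n 0), x * y = y * x)
    (hr : 1 ≤ r₁) (hs : 1 ≤ s₁) (hrb : 2 * r₁ ≤ 2 * m * n) (hsb : 2 * s₁ ≤ 2 * m * n)
    (hrs : r₁ + s₁ - 1 ≤ m * n) :
    ∃ A B : Set (PresentedGroup (Krels m n 0)),
      Nat.card A = 2 * r₁ ∧ Nat.card B = 2 * s₁ ∧
        Nat.card ↥(A * B) ≤ 2 * r₁ + 2 * s₁ - 2 :=
  stmt14_general m n r₁ s₁ hnodd hm hrb hsb
end

section
/- Let K_{m,n} be the non-abelian metacyclic group of order 2mn presented by a^m = 1, b^{2n} = a^g, bab⁻¹ = a⁻¹, and suppose m is even and g = m/2. If k is an odd positive divisor of 2mn and l = gcd(k, m), then the subgroup generated by a^{m/l} and a^{m/(2l)} b^{2nl/k} is a normal subgroup of K_{m,n} of order k. -/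
namespace Subgroup

variable {G : Type*} [Group G]

theorem closure_normal_of_conj_mem {ι : Type*} {s : ι → G} (hs : closure (Set.range s) = ⊤)
    {t : Set G} (hconj : ∀ i, ∀ u ∈ t, s i * u * (s i)⁻¹ ∈ closure t)
    (hconj_inv : ∀ i, ∀ u ∈ t, (s i)⁻¹ * u * s i ∈ closure t) : (closure t).Normal := by
  have conj_mem {c : G} (hc : ∀ u ∈ t, c * u * c⁻¹ ∈ closure t) {h : G} (hh : h ∈ closure t) :
      c * h * c⁻¹ ∈ closure t :=
    closure_le (K := (closure t).comap (MulAut.conj c).toMonoidHom) |>.2 hc hh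
  rw [← normalizer_eq_top_iff, eq_top_iff, ← hs, closure_le]
  rintro _ ⟨i, rfl⟩
  refine mem_normalizer_iff.2 fun h => ⟨conj_mem (hconj i), fun hh => ?_⟩
  simpa [mul_assoc] using conj_mem (c := (s i)⁻¹) (by simpa using hconj_inv i) hh

theorem card_eq_card_mul_card_map_mk {N S : Subgroup G} [N.Normal] (hNS : N ≤ S) :
    Nat.card S = Nat.card N * Nat.card (S.map (QuotientGroup.mk' N)) := by
  rw [← relIndex_ker, QuotientGroup.ker_mk', ← relIndex_bot_left (H := S),
    ← relIndex_bot_left (H := N)]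
  exact (relIndex_mul_relIndex _ _ _ bot_le hNS).symm

end Subgroup

section ConjInv

variable {G : Type*} [Group G] {a c : G}

theorem conj_pow_of_conj_eq_inv (h : c * a * c⁻¹ = a⁻¹) (i : ℕ) :
    c * a ^ i * c⁻¹ = (a ^ i)⁻¹ := by
  rw [← MulAut.conj_apply, map_pow, MulAut.conj_apply, h, inv_pow]

theorem inv_conj_of_conj_eq_inv (h : c * a * c⁻¹ = a⁻¹) : c⁻¹ * a * c⁻¹⁻¹ = a⁻¹ :=
  calc c⁻¹ * a * c⁻¹⁻¹ = c⁻¹ * (a⁻¹)⁻¹ * c := by group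
    _ = c⁻¹ * (c * a * c⁻¹)⁻¹ * c := by rw [h]
    _ = a⁻¹ := by group

theorem commute_sq_of_conj_eq_inv (h : c * a * c⁻¹ = a⁻¹) : Commute a (c ^ 2) := by
  have h' : c * a⁻¹ * c⁻¹ = a :=
    calc c * a⁻¹ * c⁻¹ = (c * a * c⁻¹)⁻¹ := by group
      _ = a := by rw [h, inv_inv]
  refine (mul_inv_eq_iff_eq_mul.1 ?_).symm
  calc c ^ 2 * a * (c ^ 2)⁻¹ = c * (c * a * c⁻¹) * c⁻¹ := by rw [sq]; group
    _ = a := by rw [h, h']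

theorem conj_pow_mul_of_conj_eq_inv (h : c * a * c⁻¹ = a⁻¹) {z : G} (hcz : Commute c z)
    (e : ℕ) : c * (a ^ e * z) * c⁻¹ = (a ^ (2 * e))⁻¹ * (a ^ e * z) :=
  calc c * (a ^ e * z) * c⁻¹ = (c * a ^ e * c⁻¹) * (c * z * c⁻¹) := by group
    _ = (a ^ e)⁻¹ * z := by rw [conj_pow_of_conj_eq_inv h, hcz.mul_inv_cancel]
    _ = (a ^ (2 * e))⁻¹ * (a ^ e * z) := by rw [two_mul, pow_add]; group

end ConjInv

abbrev KGroup (m n g : ℕ) := PresentedGroup (Krels m n g)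

namespace KGroup

variable {m n g : ℕ}

abbrev a : KGroup m n g := PresentedGroup.of 0

abbrev b : KGroup m n g := PresentedGroup.of 1

theorem a_pow_eq_one : (a : KGroup m n g) ^ m = 1 := by
  have h := PresentedGroup.one_of_mem (rels := Krels m n g) (Set.mem_insert _ _)
  rwa [map_pow] at h

theorem b_pow_eq_a_pow : (b : KGroup m n g) ^ (2 * n) = a ^ g := by
  have h := PresentedGroup.one_of_mem (rels := Krels m n g)
    (Set.mem_insert_of_mem _ (Set.mem_insert _ _))
  rwa [map_mul, map_inv, map_pow, map_pow, mul_inv_eq_one] at h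

theorem b_mul_a_mul_b_inv : (b : KGroup m n g) * a * b⁻¹ = a⁻¹ := by
  have h := PresentedGroup.one_of_mem (rels := Krels m n g)
    (Set.mem_insert_of_mem _ (Set.mem_insert_of_mem _ rfl))
  rw [map_mul, map_mul, map_mul, map_inv] at h
  exact eq_inv_of_mul_eq_one_left h

theorem commute_a_b_sq : Commute (a : KGroup m n g) (b ^ 2) :=
  commute_sq_of_conj_eq_inv b_mul_a_mul_b_inv

theorem closure_normal {t : Set (KGroup m n g)} (ha : ∀ u ∈ t, Commute a u)
    (hb : ∀ c : KGroup m n g, c * a * c⁻¹ = a⁻¹ → Commute c b →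
      ∀ u ∈ t, c * u * c⁻¹ ∈ Subgroup.closure t) :
    (Subgroup.closure t).Normal := by
  refine Subgroup.closure_normal_of_conj_mem (PresentedGroup.closure_range_of _) ?_ ?_ <;>
    intro i u hu <;> fin_cases i
  · show a * u * a⁻¹ ∈ _
    exact (ha u hu).mul_inv_cancel.symm ▸ Subgroup.subset_closure hu
  · exact hb b b_mul_a_mul_b_inv (Commute.refl b) u hu
  · show a⁻¹ * u * a ∈ _
    exact (ha u hu).inv_mul_cancel.symm ▸ Subgroup.subset_closure hu
  · simpa using hb b⁻¹ (inv_conj_of_conj_eq_inv b_mul_a_mul_b_inv) (Commute.refl b).inv_left u hu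

instance normal_zpowers_a_pow (j : ℕ) : (Subgroup.zpowers (a ^ j : KGroup m n g)).Normal := by
  rw [Subgroup.zpowers_eq_closure]
  refine closure_normal ?_ ?_
  · rintro u rfl
    exact (Commute.refl a).pow_right j
  · rintro c hc - u rfl
    rw [conj_pow_of_conj_eq_inv hc]
    exact inv_mem (Subgroup.mem_closure_singleton_self _)

theorem closure_normal_a_pow_mul_b_pow (e n' : ℕ) :
    (Subgroup.closure {a ^ (2 * e), a ^ e * b ^ (2 * n')} : Subgroup (KGroup m n g)).Normal := by
  set S : Subgroup (KGroup m n g) := Subgroup.closure {a ^ (2 * e), a ^ e * b ^ (2 * n')}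
  have hx : a ^ (2 * e) ∈ S := Subgroup.subset_closure (Set.mem_insert _ _)
  have hy : a ^ e * b ^ (2 * n') ∈ S := Subgroup.subset_closure (Set.mem_insert_of_mem _ rfl)
  refine closure_normal ?_ ?_
  · rintro u (rfl | rfl)
    · exact (Commute.refl a).pow_right _
    · rw [pow_mul]
      exact ((Commute.refl a).pow_right e).mul_right (commute_a_b_sq.pow_right n')
  · rintro c hc hcb u (rfl | rfl)
    · rw [conj_pow_of_conj_eq_inv hc]
      exact inv_mem hx
    · rw [conj_pow_mul_of_conj_eq_inv hc (hcb.pow_right _)]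
      exact mul_mem (inv_mem hx) hy

def toDihedral (d : ℕ) (hdm : d ∣ m) (hdg : d ∣ g) : KGroup m n g →* DihedralGroup d :=
  PresentedGroup.toGroup (f := ![.r 1, .sr 0]) <| by
    simp only [Krels, Set.mem_insert_iff, Set.mem_singleton_iff, forall_eq_or_imp, forall_eq]
    refine ⟨?_, ?_, ?_⟩
    · simp [(ZMod.natCast_eq_zero_iff _ _).2 hdm]
    · simp [(ZMod.natCast_eq_zero_iff _ _).2 hdg, pow_mul, sq]
    · simp

def toZMod : KGroup m n g →* Multiplicative (ZMod (2 * n)) :=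
  PresentedGroup.toGroup (f := ![1, .ofAdd 1]) <| by
    simp only [Krels, Set.mem_insert_iff, Set.mem_singleton_iff, forall_eq_or_imp, forall_eq]
    refine ⟨?_, ?_, ?_⟩
    · simp
    · simp [← ofAdd_nsmul]
    · simp

theorem toDihedral_a (d : ℕ) (hdm : d ∣ m) (hdg : d ∣ g) :
    toDihedral (n := n) d hdm hdg a = .r 1 :=
  PresentedGroup.toGroup.of _

theorem toZMod_a : toZMod (a : KGroup m n g) = 1 :=
  PresentedGroup.toGroup.of _

theorem toZMod_b : toZMod (b : KGroup m n g) = .ofAdd 1 :=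
  PresentedGroup.toGroup.of _

section

variable {l e k' n' : ℕ}

theorem orderOf_a_pow (hm : m = 2 * l * e) (hg : g = l * e) (hl : Odd l) (he : e ≠ 0) :
    orderOf (a ^ (2 * e) : KGroup m n g) = l := by
  refine Nat.dvd_antisymm (orderOf_dvd_of_pow_eq_one ?_) ?_
  · rw [← pow_mul, show 2 * e * l = m by rw [hm]; ring, a_pow_eq_one]
  -- Since `l` is odd, the order of `a ^ (2 * e)` is already visible in the dihedral group of
  -- order `2 * l * e₀`, where `e₀` is the odd part of `e`.
  obtain ⟨s, e₀, he₀, rfl⟩ := Nat.exists_eq_two_pow_mul_odd he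
  have hdm : l * e₀ ∣ m := ⟨2 ^ (s + 1), by rw [hm]; ring⟩
  have hdg : l * e₀ ∣ g := ⟨2 ^ s, by rw [hg]; ring⟩
  have hr : orderOf ((DihedralGroup.r 1 : DihedralGroup (l * e₀)) ^ e₀) = l := by
    have := orderOf_pow_orderOf_div (x := (DihedralGroup.r 1 : DihedralGroup (l * e₀)))
      (n := l) (by simp [hl.pos.ne', he₀.pos.ne']) (by simp)
    rwa [DihedralGroup.orderOf_r_one, Nat.mul_div_cancel_left _ hl.pos] at this
  have hσ : orderOf (toDihedral (n := n) _ hdm hdg (a ^ (2 * (2 ^ s * e₀)))) = l := by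
    rw [map_pow, toDihedral_a, show 2 * (2 ^ s * e₀) = e₀ * 2 ^ (s + 1) by ring, pow_mul,
      Nat.Coprime.orderOf_pow (by rw [hr]; exact (Nat.coprime_two_right.2 hl).pow_right _), hr]
  exact hσ ▸ orderOf_map_dvd _ _

theorem a_pow_mul_b_pow_pow_mem_zpowers (hg : g = l * e) (hn : n = k' * n') (hl : Odd l)
    (hk' : Odd k') :
    (a ^ e * b ^ (2 * n') : KGroup m n g) ^ k' ∈ Subgroup.zpowers (a ^ (2 * e)) := by
  obtain ⟨w, hw⟩ := hk'.add_odd hl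
  have hab : Commute (a ^ e : KGroup m n g) (b ^ (2 * n')) := by
    rw [pow_mul]
    exact commute_a_b_sq.pow_pow e n'
  refine ⟨w, ?_⟩
  calc (a ^ (2 * e) : KGroup m n g) ^ (w : ℤ) = a ^ (e * k') * a ^ g := by
        rw [zpow_natCast, ← pow_mul, ← pow_add, hg, show e * k' + l * e = e * (k' + l) by ring, hw]
        ring_nf
    _ = (a ^ e * b ^ (2 * n')) ^ k' := by
        rw [← b_pow_eq_a_pow, hab.mul_pow, ← pow_mul, ← pow_mul, hn]
        ring_nf

theorem orderOf_mk_a_pow_mul_b_pow (hg : g = l * e) (hn : n = k' * n') (hl : Odd l)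
    (hk' : Odd k') (hn' : n' ≠ 0) :
    orderOf ((a ^ e * b ^ (2 * n') : KGroup m n g) :
      KGroup m n g ⧸ Subgroup.zpowers (a ^ (2 * e))) = k' := by
  refine Nat.dvd_antisymm (orderOf_dvd_of_pow_eq_one ?_) ?_
  · rw [← QuotientGroup.mk_pow, QuotientGroup.eq_one_iff]
    exact a_pow_mul_b_pow_pow_mem_zpowers hg hn hl hk'
  have hker : Subgroup.zpowers (a ^ (2 * e)) ≤ (toZMod : KGroup m n g →* _).ker := by
    simp [Subgroup.zpowers_le, toZMod_a]
  have hρ : toZMod (a ^ e * b ^ (2 * n') : KGroup m n g) =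
      .ofAdd ((2 * n' : ℕ) : ZMod (2 * n)) := by
    simp [toZMod_a, toZMod_b, ← ofAdd_nsmul]
  have hord : orderOf (toZMod (a ^ e * b ^ (2 * n') : KGroup m n g)) = k' := by
    have hn2 : 2 * n = k' * (2 * n') := by rw [hn]; ring
    rw [hρ, orderOf_ofAdd_eq_addOrderOf, ZMod.addOrderOf_coe _ (by simp [hn2, hk'.pos.ne', hn']),
      hn2, Nat.gcd_mul_left_left, Nat.mul_div_cancel _ (by positivity)]
  exact hord ▸ orderOf_map_dvd (QuotientGroup.lift _ toZMod hker) _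

theorem card_closure_a_pow_mul_b_pow (hm : m = 2 * l * e) (hg : g = l * e) (hn : n = k' * n')
    (hl : Odd l) (hk' : Odd k') (he : e ≠ 0) (hn' : n' ≠ 0) :
    Nat.card (Subgroup.closure {a ^ (2 * e), a ^ e * b ^ (2 * n')} : Subgroup (KGroup m n g)) =
      l * k' := by
  have hXS : Subgroup.zpowers (a ^ (2 * e)) ≤
      (Subgroup.closure {a ^ (2 * e), a ^ e * b ^ (2 * n')} : Subgroup (KGroup m n g)) :=
    Subgroup.zpowers_le.2 (Subgroup.subset_closure (Set.mem_insert _ _))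
  have hmap : (Subgroup.closure {a ^ (2 * e), a ^ e * b ^ (2 * n')}).map
      (QuotientGroup.mk' (Subgroup.zpowers (a ^ (2 * e)))) =
      Subgroup.zpowers ((a ^ e * b ^ (2 * n') : KGroup m n g) :
        KGroup m n g ⧸ Subgroup.zpowers (a ^ (2 * e))) := by
    rw [MonoidHom.map_closure, Set.image_pair, QuotientGroup.mk'_apply,
      (QuotientGroup.eq_one_iff _).2 (Subgroup.mem_zpowers _), Subgroup.closure_insert_one,
      ← Subgroup.zpowers_eq_closure]
    rfl
  rw [Subgroup.card_eq_card_mul_card_map_mk hXS, hmap, Nat.card_zpowers, Nat.card_zpowers,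
    orderOf_a_pow hm hg hl he, orderOf_mk_a_pow_mul_b_pow hg hn hl hk' hn']

end

end KGroup

theorem exists_eq_gcd_mul_of_odd_dvd {m n k : ℕ} (hmeven : Even m) (hk : k ∣ 2 * m * n)
    (hkodd : Odd k) :
    ∃ e k' n', m = 2 * Nat.gcd k m * e ∧ n = k' * n' ∧ k = Nat.gcd k m * k' ∧ Odd k' := by
  set l := Nat.gcd k m
  have hl : Odd l := hkodd.of_dvd_nat (Nat.gcd_dvd_left k m)
  obtain ⟨k', hkk⟩ : l ∣ k := Nat.gcd_dvd_left k m
  obtain ⟨e, hme⟩ : 2 * l ∣ m := (Nat.coprime_two_left.2 hl).mul_dvd_of_dvd_of_dvd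
    hmeven.two_dvd (Nat.gcd_dvd_right k m)
  have hk' : Odd k' := (Nat.odd_mul.1 (hkk ▸ hkodd)).2
  have hcop : Nat.Coprime k' (2 * e) := by
    have := Nat.coprime_div_gcd_div_gcd (m := k) (n := m) (Nat.gcd_pos_of_pos_left _ hkodd.pos)
    rwa [show k / l = k' by rw [hkk, Nat.mul_div_cancel_left _ hl.pos],
      show m / l = 2 * e by rw [hme, mul_comm 2 l, mul_assoc, Nat.mul_div_cancel_left _ hl.pos]]
      at this
  have hdvd : k' ∣ 2 * e * (2 * n) := by
    refine Nat.dvd_of_mul_dvd_mul_left hl.pos ?_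
    rw [← hkk]
    convert hk using 1
    rw [hme]
    ring
  obtain ⟨n', hnn⟩ := (Nat.coprime_two_right.2 hk').dvd_of_dvd_mul_left
    (hcop.dvd_of_dvd_mul_left hdvd)
  exact ⟨e, k', n', hme, hnn, hkk, hk'⟩

theorem stmt19_general (m n k : ℕ) (hmeven : Even m) (hm : 1 ≤ m) (hn : 1 ≤ n)
    (hk : k ∣ 2 * m * n) (hkodd : Odd k) :
    (Subgroup.closure
        {(PresentedGroup.of 0 : PresentedGroup (Krels m n (m / 2))) ^ (m / Nat.gcd k m),
         (PresentedGroup.of 0 : PresentedGroup (Krels m n (m / 2))) ^ (m / (2 * Nat.gcd k m)) *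
           PresentedGroup.of 1 ^ (2 * n * Nat.gcd k m / k)}).Normal ∧
    Nat.card (Subgroup.closure
        {(PresentedGroup.of 0 : PresentedGroup (Krels m n (m / 2))) ^ (m / Nat.gcd k m),
         (PresentedGroup.of 0 : PresentedGroup (Krels m n (m / 2))) ^ (m / (2 * Nat.gcd k m)) *
           PresentedGroup.of 1 ^ (2 * n * Nat.gcd k m / k)}) = k := by
  obtain ⟨e, k', n', hme, hnn, hkk, hk'⟩ := exists_eq_gcd_mul_of_odd_dvd hmeven hk hkodd
  set l := Nat.gcd k m
  have hl : Odd l := hkodd.of_dvd_nat (Nat.gcd_dvd_left k m)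
  have he : e ≠ 0 := by rintro rfl; omega
  have hn' : n' ≠ 0 := by rintro rfl; omega
  have hg : m / 2 = l * e := by rw [hme, mul_assoc, Nat.mul_div_cancel_left _ two_pos]
  have hx : m / l = 2 * e := by rw [hme, mul_comm 2 l, mul_assoc, Nat.mul_div_cancel_left _ hl.pos]
  have hy₁ : m / (2 * l) = e := by rw [hme, Nat.mul_div_cancel_left _ (by positivity)]
  have hy₂ : 2 * n * l / k = 2 * n' := by
    rw [hnn, hkk, show 2 * (k' * n') * l = l * k' * (2 * n') by ring,
      Nat.mul_div_cancel_left _ (Nat.mul_pos hl.pos hk'.pos)]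
  rw [hx, hy₁, hy₂]
  exact ⟨KGroup.closure_normal_a_pow_mul_b_pow e n',
    (KGroup.card_closure_a_pow_mul_b_pow hme hg hnn hl hk' he hn').trans hkk.symm⟩

theorem stmt19 (m n k : ℕ) (hmeven : Even m) (hm : 1 ≤ m) (hn : 1 ≤ n)
    (hna : ¬ ∀ x y : PresentedGroup (Krels m n (m / 2)), x * y = y * x)
    (hkpos : 0 < k) (hk : k ∣ 2 * m * n) (hkodd : Odd k) :
    (Subgroup.closure
        {(PresentedGroup.of 0 : PresentedGroup (Krels m n (m / 2))) ^ (m / Nat.gcd k m),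
         (PresentedGroup.of 0 : PresentedGroup (Krels m n (m / 2))) ^ (m / (2 * Nat.gcd k m)) *
           PresentedGroup.of 1 ^ (2 * n * Nat.gcd k m / k)}).Normal ∧
    Nat.card (Subgroup.closure
        {(PresentedGroup.of 0 : PresentedGroup (Krels m n (m / 2))) ^ (m / Nat.gcd k m),
         (PresentedGroup.of 0 : PresentedGroup (Krels m n (m / 2))) ^ (m / (2 * Nat.gcd k m)) *
           PresentedGroup.of 1 ^ (2 * n * Nat.gcd k m / k)}) = k :=
  stmt19_general m n k hmeven hm hn hk hkodd
end
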